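/- arXiv:math/0409114 — 4 statements merged into one kernel-verified Lean document; each statement's English description precedes it below -/
import Mathlib

section
/- Let I be a strongly stable monomial ideal of R = K[x_1,…,x_n], let 1 ≤ j ≤ n and t ≥ 1. Then x_j^t ∈ I if and only if the degree-t graded piece of R/(I + (x_{j+1},…,x_n)) is zero, and this holds if and only if every monomial of degree t in the variables x_1,…,x_j belongs to I. (This gives, for strongly stable I and s ≥ dim(R/I), the identity min{k : x_{n−s}^{k+1} ∈ I} = min{k : H(R/(I+(x_{n−s+1},…,x_n)), k+1) = 0} for the s-reduction number r_s(R/I).) -/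
open MvPolynomial

namespace Paper

variable {K : Type*} [Field K] {n : ℕ}

/-- `I` is a monomial ideal: together with any polynomial it contains all its monomials. -/
def IsMonomialIdeal (I : Ideal (MvPolynomial (Fin n) K)) : Prop :=
  ∀ f ∈ I, ∀ k ∈ f.support, (monomial k (1 : K)) ∈ I

/-- `I` is a strongly stable (Borel fixed) monomial ideal. -/
def StronglyStable (I : Ideal (MvPolynomial (Fin n) K)) : Prop :=
  IsMonomialIdeal I ∧
    ∀ k : Fin n →₀ ℕ, (monomial k (1 : K)) ∈ I →
      ∀ i j : Fin n, j < i → k i ≠ 0 →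
        (monomial (k + Finsupp.single j 1 - Finsupp.single i 1) (1 : K)) ∈ I

/-- The monomial with exponent vector `k` is a minimal generator of the monomial ideal `I`. -/
def IsMinGen (I : Ideal (MvPolynomial (Fin n) K)) (k : Fin n →₀ ℕ) : Prop :=
  (monomial k (1 : K)) ∈ I ∧
    ∀ i : Fin n, k i ≠ 0 → (monomial (k - Finsupp.single i 1) (1 : K)) ∉ I

/-- The total degree of an exponent vector. -/
def expDeg (k : Fin n →₀ ℕ) : ℕ := k.sum fun _ e => e

/-- The smallest (1-based) index of a variable occurring in the monomial `x^k`. -/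
noncomputable def minIdx (k : Fin n →₀ ℕ) : ℕ :=
  sInf {v : ℕ | ∃ i : Fin n, k i ≠ 0 ∧ v = (i : ℕ) + 1}

/-- The largest (1-based) index of a variable occurring in the monomial `x^k`. -/
noncomputable def maxIdx (k : Fin n →₀ ℕ) : ℕ :=
  sSup {v : ℕ | ∃ i : Fin n, k i ≠ 0 ∧ v = (i : ℕ) + 1}

/-- `D(I)`: the maximum of `min(m)` over minimal generators `m` of `I`. -/
noncomputable def DD (I : Ideal (MvPolynomial (Fin n) K)) : ℕ :=
  sSup {v : ℕ | ∃ k : Fin n →₀ ℕ, IsMinGen I k ∧ v = minIdx k}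

/-- `M(I)`: the maximum of `max(m)` over minimal generators `m` of `I`. -/
noncomputable def MM (I : Ideal (MvPolynomial (Fin n) K)) : ℕ :=
  sSup {v : ℕ | ∃ k : Fin n →₀ ℕ, IsMinGen I k ∧ v = maxIdx k}

/-- The Hilbert function of `R/I` in (integer) degree `t`:
the `K`-dimension of the degree-`t` graded piece of `R/I`. -/
noncomputable def HF (I : Ideal (MvPolynomial (Fin n) K)) (t : ℤ) : ℕ :=
  if 0 ≤ t then
    Module.finrank K (homogeneousSubmodule (Fin n) K t.toNat) -
      Module.finrank K
        ((homogeneousSubmodule (Fin n) K t.toNat ⊓ Submodule.restrictScalars K I :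
          Submodule K (MvPolynomial (Fin n) K)))
  else 0

/-- The first difference `ΔH(R/I,t) = H(R/I,t) - H(R/I,t-1)` of the Hilbert function. -/
noncomputable def dH (I : Ideal (MvPolynomial (Fin n) K)) (t : ℤ) : ℤ :=
  (HF I t : ℤ) - HF I (t - 1)

/-- The second difference of the Hilbert function. -/
noncomputable def d2H (I : Ideal (MvPolynomial (Fin n) K)) (t : ℤ) : ℤ :=
  dH I t - dH I (t - 1)

/-- The irrelevant maximal ideal `(x_1, …, x_n)`. -/
noncomputable def irrel (n : ℕ) (K : Type*) [Field K] : Ideal (MvPolynomial (Fin n) K) :=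
  Ideal.span (Set.range X)

/-- `I` is saturated: `(I : (x_1,…,x_n)) = I`. -/
def IsSaturatedIdeal (I : Ideal (MvPolynomial (Fin n) K)) : Prop :=
  Submodule.colon I (irrel n K) = I

/-- The saturation `I^sat = ⋃ₖ (I : (x_1,…,x_n)^k)`. -/
noncomputable def saturation (I : Ideal (MvPolynomial (Fin n) K)) :
    Ideal (MvPolynomial (Fin n) K) :=
  ⨆ k : ℕ, Submodule.colon I (((irrel n K) ^ k : Ideal (MvPolynomial (Fin n) K)) : Set (MvPolynomial (Fin n) K))

/-- `I` is a homogeneous ideal: it contains all homogeneous components of its elements. -/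
def IsHomogeneousIdeal (I : Ideal (MvPolynomial (Fin n) K)) : Prop :=
  ∀ f ∈ I, ∀ i : ℕ, homogeneousComponent i f ∈ I

/-- `⟨I_{≤ d}⟩`: the ideal generated by the homogeneous elements of `I` of degree at most `d`. -/
noncomputable def idealLE (I : Ideal (MvPolynomial (Fin n) K)) (d : ℕ) : Ideal (MvPolynomial (Fin n) K) :=
  Ideal.span {f | f ∈ I ∧ ∃ e : ℕ, e ≤ d ∧ f.IsHomogeneous e}

/-- The initial degree of `I`: the least `t` with `I_t ≠ 0`. -/
noncomputable def initDeg (I : Ideal (MvPolynomial (Fin n) K)) : ℕ :=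
  sInf {t : ℕ | ∃ f ∈ I, f ≠ 0 ∧ f.IsHomogeneous t}

/-- First difference operator for integer-indexed functions. -/
def diffFun (f : ℤ → ℤ) : ℤ → ℤ := fun t => f t - f (t - 1)

/-- The depth of `R/I` with respect to the irrelevant maximal ideal: the maximal length of an
`R/I`-regular sequence of homogeneous elements of positive degree. -/
noncomputable def homDepth (I : Ideal (MvPolynomial (Fin n) K)) : ℕ :=
  sSup {k : ℕ | ∃ rs : List (MvPolynomial (Fin n) K), rs.length = k ∧
    (∀ r ∈ rs, ∃ e : ℕ, 0 < e ∧ r.IsHomogeneous e) ∧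
    RingTheory.Sequence.IsRegular (MvPolynomial (Fin n) K ⧸ I) rs}

/-- The affine cone over a set of points of projective space `ℙ^{n-1}`. -/
def cone (Z : Set (Projectivization K (Fin n → K))) : Set (Fin n → K) :=
  {v | v = 0 ∨ ∃ hv : v ≠ 0, Projectivization.mk K v hv ∈ Z}

/-- The homogeneous vanishing ideal of a set of points of projective space:
all polynomials vanishing on the affine cone. -/
def vIdeal (Z : Set (Projectivization K (Fin n → K))) : Ideal (MvPolynomial (Fin n) K) where
  carrier := {f | ∀ v ∈ cone Z, eval v f = 0}
  add_mem' := by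
    intro a b ha hb v hv
    simp [map_add, ha v hv, hb v hv]
  zero_mem' := by
    intro v hv
    simp
  smul_mem' := by
    intro c f hf v hv
    simp [smul_eq_mul, hf v hv]

/-- The Uniform Position Property: any two subsets of the same cardinality have the same
Hilbert function. -/
def UPP (Z : Finset (Projectivization K (Fin n → K))) : Prop :=
  ∀ A B : Finset (Projectivization K (Fin n → K)), A ⊆ Z → B ⊆ Z → A.card = B.card →
    ∀ t : ℤ, HF (vIdeal (A : Set (Projectivization K (Fin n → K)))) t =
      HF (vIdeal (B : Set (Projectivization K (Fin n → K)))) t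

/-- `g₂(I,t)`: the minimum over pairs of linear forms `(L₁,L₂)` of
`dim_K (R/(I + (L₁,L₂)))_t` (the value attained by a generic pair). -/
noncomputable def g2 (I : Ideal (MvPolynomial (Fin n) K)) (t : ℤ) : ℕ :=
  sInf {v : ℕ | ∃ L₁ L₂ : MvPolynomial (Fin n) K, L₁.IsHomogeneous 1 ∧ L₂.IsHomogeneous 1 ∧
    v = HF (I ⊔ Ideal.span {L₁, L₂}) t}

/-- The Artinian reduction of `R/I` has the Weak Lefschetz Property. -/
def WLP (I : Ideal (MvPolynomial (Fin n) K)) : Prop :=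
  ∃ L₁ L₂ : MvPolynomial (Fin n) K, L₁.IsHomogeneous 1 ∧ L₂.IsHomogeneous 1 ∧
    (∀ g, L₁ * g ∈ I → g ∈ I) ∧
    ∀ t : ℕ,
      (∀ f : MvPolynomial (Fin n) K, f.IsHomogeneous t →
        L₂ * f ∈ I ⊔ Ideal.span {L₁} → f ∈ I ⊔ Ideal.span {L₁}) ∨
      (∀ g : MvPolynomial (Fin n) K, g.IsHomogeneous (t + 1) →
        ∃ f : MvPolynomial (Fin n) K, f.IsHomogeneous t ∧ g - L₂ * f ∈ I ⊔ Ideal.span {L₁})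

/-! Strong stability lets a monomial of `I` trade a factor `x_i` for any `x_j` with `j < i`, so
from `x_j^t` one reaches every monomial of degree `t` in `x_1, …, x_j`. Modulo the monomial ideal
`(x_{j+1}, …, x_n)`, a form of degree `t` reduces to its monomials in `x_1, …, x_j`; conversely,
as `I` is monomial, comparing the coefficient of `x_j^t` shows that `x_j^t ∈ I + (x_{j+1}, …, x_n)`
forces `x_j^t ∈ I`. -/

end Paper

namespace MvPolynomial

variable {σ R : Type*} [CommSemiring R]

theorem mem_of_forall_monomial_mem {L : Ideal (MvPolynomial σ R)} {f : MvPolynomial σ R}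
    (h : ∀ k ∈ f.support, monomial k (1 : R) ∈ L) : f ∈ L := by
  rw [f.as_sum]
  refine L.sum_mem fun k hk => ?_
  rw [← mul_one (coeff k f), ← C_mul_monomial]
  exact L.mul_mem_left _ (h k hk)

theorem IsHomogeneous.mem_sup_span_X_image {I : Ideal (MvPolynomial σ R)} {s : Set σ} {t : ℕ}
    (hI : ∀ k : σ →₀ ℕ, k.degree = t → (∀ i ∈ k.support, i ∉ s) → monomial k (1 : R) ∈ I)
    {f : MvPolynomial σ R} (hf : f.IsHomogeneous t) :
    f ∈ I ⊔ Ideal.span (X '' s) := by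
  refine mem_of_forall_monomial_mem fun k hk => ?_
  by_cases hks : ∃ i ∈ k.support, i ∈ s
  · obtain ⟨i, hik, his⟩ := hks
    refine Ideal.mem_sup_right (mem_ideal_span_X_image.2 fun m hm => ⟨i, his, ?_⟩)
    rw [Finset.mem_singleton.1 (support_monomial_subset hm)]
    exact Finsupp.mem_support_iff.1 hik
  · have hdeg : k.degree = t := by
      rw [Finsupp.degree_eq_weight_one]
      exact hf (mem_support_iff.1 hk)
    exact Ideal.mem_sup_left (hI k hdeg fun i hik his => hks ⟨i, hik, his⟩)

end MvPolynomial

namespace Paper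

open MvPolynomial

variable {K : Type*} [Field K] {n : ℕ} {I : Ideal (MvPolynomial (Fin n) K)}

theorem IsMonomialIdeal.monomial_mem_of_mem_sup_span_X_image (hI : IsMonomialIdeal I)
    {s : Set (Fin n)} {k : Fin n →₀ ℕ} (hks : ∀ i ∈ s, k i = 0)
    (h : monomial k (1 : K) ∈ I ⊔ Ideal.span (X '' s)) : monomial k (1 : K) ∈ I := by
  obtain ⟨a, ha, b, hb, hab⟩ := Submodule.mem_sup.1 h
  have hb_coeff : coeff k b = 0 := by
    by_contra hne
    obtain ⟨i, his, hki⟩ := mem_ideal_span_X_image.1 hb k (mem_support_iff.2 hne)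
    exact hki (hks i his)
  have ha_coeff : coeff k a = 1 := by
    rw [← add_zero (coeff k a), ← hb_coeff, ← coeff_add, hab, coeff_monomial, if_pos rfl]
  exact hI a ha k (mem_support_iff.2 (by rw [ha_coeff]; exact one_ne_zero))

namespace StronglyStable

theorem monomial_add_single_mem_of_lt (hSS : StronglyStable I) {i j : Fin n} (hij : i < j)
    {k : Fin n →₀ ℕ} (hk : monomial (k + Finsupp.single j 1) (1 : K) ∈ I) :
    monomial (k + Finsupp.single i 1) (1 : K) ∈ I := by
  have := hSS.2 _ hk j i hij (by simp)
  rwa [add_right_comm, add_tsub_cancel_right] at this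

theorem monomial_add_single_mem (hSS : StronglyStable I) {j : Fin n} (l : Fin n →₀ ℕ)
    (hl : ∀ i ∈ l.support, i < j) (c : ℕ)
    (h : monomial (Finsupp.single j (l.degree + c)) (1 : K) ∈ I) :
    monomial (l + Finsupp.single j c) (1 : K) ∈ I := by
  induction hd : l.degree generalizing l c with
  | zero =>
    rw [Finsupp.degree_eq_zero_iff] at hd
    simpa [hd] using h
  | succ d ih =>
    obtain ⟨i, hi⟩ : l.support.Nonempty := by
      rw [Finset.nonempty_iff_ne_empty, Ne, Finsupp.support_eq_empty]
      rintro rfl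
      simp at hd
    obtain ⟨l₀, rfl⟩ : ∃ l₀, l = l₀ + Finsupp.single i 1 :=
      le_iff_exists_add'.1 (Finsupp.single_le_iff.2 (Nat.one_le_iff_ne_zero.2
        (Finsupp.mem_support_iff.1 hi)))
    have hl₀ : ∀ i' ∈ l₀.support, i' < j := fun i' hi' =>
      hl i' (Finsupp.support_mono le_self_add hi')
    have hd₀ : l₀.degree = d := by simpa using hd
    have hmem := ih l₀ hl₀ (c + 1) (by rw [hd₀, ← add_assoc]; rwa [hd, add_right_comm] at h) hd₀
    rw [Finsupp.single_add, ← add_assoc] at hmem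
    rw [add_right_comm]
    exact hSS.monomial_add_single_mem_of_lt (hl i hi) hmem

theorem monomial_mem_of_X_pow_mem (hSS : StronglyStable I) {j : Fin n} {t : ℕ}
    (hx : X j ^ t ∈ I) {k : Fin n →₀ ℕ} (hdeg : k.degree = t) (hk : ∀ i ∈ k.support, i ≤ j) :
    monomial k (1 : K) ∈ I := by
  have hsplit : k.erase j + Finsupp.single j (k j) = k := Finsupp.erase_add_single j k
  have hlow : ∀ i ∈ (k.erase j).support, i < j := fun i hi => by
    rw [Finsupp.support_erase, Finset.mem_erase] at hi
    exact lt_of_le_of_ne (hk i hi.2) hi.1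
  rw [← hsplit]
  refine hSS.monomial_add_single_mem _ hlow _ ?_
  rwa [← Finsupp.degree_single j (k j), ← map_add, hsplit, hdeg, ← X_pow_eq_monomial]

end StronglyStable

theorem pow_mem_iff_piece_eq_zero_general {K : Type*} [Field K] {n : ℕ}
    (I : Ideal (MvPolynomial (Fin n) K)) (hSS : StronglyStable I)
    (j : Fin n) (t : ℕ) :
    ((X j : MvPolynomial (Fin n) K) ^ t ∈ I ↔
      ∀ f : MvPolynomial (Fin n) K, f.IsHomogeneous t →
        f ∈ I ⊔ Ideal.span {g : MvPolynomial (Fin n) K | ∃ i : Fin n, j < i ∧ g = X i}) ∧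
    ((X j : MvPolynomial (Fin n) K) ^ t ∈ I ↔
      ∀ k : Fin n →₀ ℕ, expDeg k = t → (∀ i ∈ k.support, i ≤ j) →
        (MvPolynomial.monomial k (1 : K)) ∈ I) := by
  have hvars : {g : MvPolynomial (Fin n) K | ∃ i : Fin n, j < i ∧ g = X i} = X '' Set.Ioi j := by
    ext; simp [eq_comm]
  have hmonomials : (X j : MvPolynomial (Fin n) K) ^ t ∈ I ↔
      ∀ k : Fin n →₀ ℕ, expDeg k = t → (∀ i ∈ k.support, i ≤ j) → monomial k (1 : K) ∈ I := by
    refine ⟨fun hx k hdeg hk => hSS.monomial_mem_of_X_pow_mem hx hdeg hk, fun h => ?_⟩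
    rw [X_pow_eq_monomial]
    exact h _ (Finsupp.degree_single j t) fun i hi => (Finset.mem_singleton.1
      (Finsupp.support_single_subset hi)).le
  refine ⟨⟨fun hx f hf => ?_, fun h => ?_⟩, hmonomials⟩
  · rw [hvars]
    exact hf.mem_sup_span_X_image fun k hdeg hk =>
      hmonomials.1 hx k hdeg fun i hi => not_lt.1 (hk i hi)
  · rw [X_pow_eq_monomial]
    refine hSS.1.monomial_mem_of_mem_sup_span_X_image (s := Set.Ioi j) (fun i hij => ?_) ?_
    · exact Finsupp.single_eq_of_ne (ne_of_gt hij)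
    · rw [← X_pow_eq_monomial, ← hvars]
      exact h _ (isHomogeneous_X_pow j t)

theorem pow_mem_iff_piece_eq_zero {K : Type*} [Field K] {n : ℕ}
    (I : Ideal (MvPolynomial (Fin n) K)) (hSS : StronglyStable I)
    (j : Fin n) (t : ℕ) (ht : 1 ≤ t) :
    ((X j : MvPolynomial (Fin n) K) ^ t ∈ I ↔
      ∀ f : MvPolynomial (Fin n) K, f.IsHomogeneous t →
        f ∈ I ⊔ Ideal.span {g : MvPolynomial (Fin n) K | ∃ i : Fin n, j < i ∧ g = X i}) ∧
    ((X j : MvPolynomial (Fin n) K) ^ t ∈ I ↔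
      ∀ k : Fin n →₀ ℕ, expDeg k = t → (∀ i ∈ k.support, i ≤ j) →
        (MvPolynomial.monomial k (1 : K)) ∈ I) :=
  pow_mem_iff_piece_eq_zero_general I hSS j t

end Paper
end

section
/- Let I be a saturated strongly stable monomial ideal of R = K[x_1,…,x_n] (n ≥ 2) with Krull dimension of R/I equal to 1. Then the maximal degree of a minimal generator of I equals min{t : x_{n−1}^t ∈ I}; in particular every minimal generator of I has degree at most this value, and x_{n−1}^{min{t : x_{n−1}^t ∈ I}} is itself a minimal generator. -/
open MvPolynomial

namespace Paper

variable {K : Type*} [Field K] {n : ℕ}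

/-!
A strongly stable ideal stays closed under moving exponent from a variable to a smaller one.
With saturation this keeps `x_n` out of every minimal generator: dividing one by `x_n` and
multiplying by any `x_i` is such a move. If no power of `x_{n-1}` lay in `I`, moving all exponent
onto `x_{n-1}` would show that every monomial of `I` involves one of `x_1, …, x_{n-2}`, so `R/I`
would surject onto `K[x_{n-1}, x_n]` and have dimension at least two. Once `x_{n-1}^s ∈ I`, moving
exponent down from `x_{n-1}^d` puts every monomial of degree `d ≥ s` in `x_1, …, x_{n-1}` into `I`,
so a minimal generator of degree above `s` would stay in `I` after dropping one variable.
-/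

theorem expDeg_eq_degree (k : Fin n →₀ ℕ) : expDeg k = k.degree := rfl

section

variable {I : Ideal (MvPolynomial (Fin n) K)}

theorem StronglyStable.monomial_add_single_one_mem (hI : StronglyStable I)
    {u : Fin n →₀ ℕ} {i j : Fin n} (hji : j ≤ i)
    (h : monomial (u + Finsupp.single i 1) (1 : K) ∈ I) :
    monomial (u + Finsupp.single j 1) (1 : K) ∈ I := by
  rcases hji.lt_or_eq with hji | rfl
  · have := hI.2 _ h i j hji (by simp)
    rwa [add_right_comm, add_tsub_cancel_right] at this
  · exact h

theorem StronglyStable.monomial_add_single_mem_s5 (hI : StronglyStable I)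
    {i j : Fin n} (hji : j ≤ i) {e : ℕ} {u : Fin n →₀ ℕ}
    (h : monomial (u + Finsupp.single i e) (1 : K) ∈ I) :
    monomial (u + Finsupp.single j e) (1 : K) ∈ I := by
  induction e generalizing u with
  | zero => simpa using h
  | succ e ih =>
    rw [Finsupp.single_add, ← add_assoc] at h ⊢
    have h' := hI.monomial_add_single_one_mem hji h
    rw [add_right_comm] at h' ⊢
    exact ih h'

theorem StronglyStable.monomial_add_single_degree_mem_of_ge (hI : StronglyStable I)
    {j : Fin n} {v : Fin n →₀ ℕ} (hv : ∀ i, v i ≠ 0 → j ≤ i) {u : Fin n →₀ ℕ}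
    (h : monomial (u + v) (1 : K) ∈ I) :
    monomial (u + Finsupp.single j v.degree) (1 : K) ∈ I := by
  induction v using Finsupp.induction_linear generalizing u with
  | zero => simpa using h
  | add f g hf hg =>
    have hfg := hg (fun i hi => hv i (by simp [hi])) (by rwa [← add_assoc] at h)
    rw [add_right_comm] at hfg
    have := hf (fun i hi => hv i (by simp [hi])) hfg
    rwa [map_add, Finsupp.single_add, add_comm (Finsupp.single j f.degree), ← add_assoc]
  | single i a =>
    rcases eq_or_ne a 0 with rfl | ha
    · simpa using h
    · rw [Finsupp.degree_single]
      exact hI.monomial_add_single_mem_s5 (hv i (by simpa using ha)) h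

theorem StronglyStable.monomial_add_mem_of_le (hI : StronglyStable I)
    {j : Fin n} {v : Fin n →₀ ℕ} (hv : ∀ i, v i ≠ 0 → i ≤ j) {u : Fin n →₀ ℕ}
    (h : monomial (u + Finsupp.single j v.degree) (1 : K) ∈ I) :
    monomial (u + v) (1 : K) ∈ I := by
  induction v using Finsupp.induction_linear generalizing u with
  | zero => simpa using h
  | add f g hf hg =>
    rw [map_add, Finsupp.single_add, ← add_assoc] at h
    have hfg := hf (fun i hi => hv i (by simp [hi])) (by rwa [add_right_comm] at h)
    rw [← add_assoc]
    exact hg (fun i hi => hv i (by simp [hi])) (by rwa [add_right_comm] at hfg)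
  | single i a =>
    rcases eq_or_ne a 0 with rfl | ha
    · simpa using h
    · rw [Finsupp.degree_single] at h
      exact hI.monomial_add_single_mem_s5 (hv i (by simpa using ha)) h

theorem StronglyStable.monomial_mem_of_le_degree (hI : StronglyStable I)
    {j : Fin n} {s : ℕ} (hs : X j ^ s ∈ I) {v : Fin n →₀ ℕ} (hv : ∀ i, v i ≠ 0 → i ≤ j)
    (hsv : s ≤ v.degree) : monomial v (1 : K) ∈ I := by
  have hpow : monomial (0 + Finsupp.single j v.degree) (1 : K) ∈ I := by
    rw [zero_add, ← X_pow_eq_monomial, ← Nat.add_sub_cancel' hsv, pow_add]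
    exact I.mul_mem_right _ hs
  simpa using hI.monomial_add_mem_of_le hv hpow

theorem StronglyStable.monomial_mem_of_add_single_mem (hI : StronglyStable I)
    (hsat : IsSaturatedIdeal I) {l : Fin n} (hl : ∀ i, i ≤ l) {w : Fin n →₀ ℕ}
    (h : monomial (w + Finsupp.single l 1) (1 : K) ∈ I) : monomial w (1 : K) ∈ I := by
  rw [← hsat, irrel, Ideal.colon_span, Submodule.mem_colon]
  rintro _ ⟨i, rfl⟩
  rw [smul_eq_mul, X, monomial_mul, one_mul]
  exact hI.monomial_add_single_one_mem (hl i) h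

theorem IsMinGen.apply_eq_zero_of_forall_le (hI : StronglyStable I) (hsat : IsSaturatedIdeal I)
    {k : Fin n →₀ ℕ} (hk : IsMinGen I k) {l : Fin n} (hl : ∀ i, i ≤ l) : k l = 0 := by
  by_contra hkl
  refine hk.2 l hkl (hI.monomial_mem_of_add_single_mem hsat hl ?_)
  rw [tsub_add_cancel_of_le (Finsupp.single_le_iff.mpr (Nat.one_le_iff_ne_zero.mpr hkl))]
  exact hk.1

theorem IsMonomialIdeal.natCard_le_ringKrullDim_quotient
    (hI : IsMonomialIdeal I) {σ : Type*} [Finite σ] {f : σ → Fin n} (hf : Function.Injective f)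
    (h : ∀ v, monomial v (1 : K) ∈ I → ¬ ↑v.support ⊆ Set.range f) :
    (Nat.card σ : WithBot ℕ∞) ≤ ringKrullDim (MvPolynomial (Fin n) K ⧸ I) := by
  have hker : I ≤ RingHom.ker (killCompl (R := K) hf) := by
    intro p hp
    rw [RingHom.mem_ker, p.as_sum, map_sum]
    exact Finset.sum_eq_zero fun v hv =>
      killCompl_monomial_eq_zero_of_not_subset hf _ (h v (hI p hp v hv))
  let φ := Ideal.Quotient.lift I (killCompl (R := K) hf).toRingHom hker
  have hφ : Function.Surjective φ := fun q =>
    ⟨Ideal.Quotient.mk I (rename f q), by simp [φ, killCompl_rename_app]⟩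
  calc (Nat.card σ : WithBot ℕ∞) = ringKrullDim K + Nat.card σ := by
        simp [ringKrullDim_eq_zero_of_field]
    _ ≤ ringKrullDim (MvPolynomial σ K) := ringKrullDim_add_natCard_le_ringKrullDim_mvPolynomial σ
    _ ≤ _ := ringKrullDim_le_of_surjective φ hφ

theorem StronglyStable.sub_le_ringKrullDim_quotient
    (hI : StronglyStable I) {j : Fin n} (hj : ∀ t, X j ^ t ∉ I) :
    ((n - j : ℕ) : WithBot ℕ∞) ≤ ringKrullDim (MvPolynomial (Fin n) K ⧸ I) := by
  have hcard : Nat.card {i : Fin n // j ≤ i} = n - j := by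
    simp [Nat.card_eq_fintype_card, Fintype.card_subtype, Finset.filter_le_eq_Ici]
  rw [← hcard]
  refine hI.1.natCard_le_ringKrullDim_quotient Subtype.val_injective fun v _ hsub => ?_
  refine hj v.degree ?_
  rw [X_pow_eq_monomial, ← zero_add (Finsupp.single j _)]
  refine hI.monomial_add_single_degree_mem_of_ge (fun i hi => ?_) (by rwa [zero_add])
  obtain ⟨⟨i, hji⟩, rfl⟩ := hsub (Finsupp.mem_support_iff.mpr hi)
  exact hji

theorem IsMinGen.expDeg_le (hI : StronglyStable I)
    (hsat : IsSaturatedIdeal I) {k : Fin n →₀ ℕ} (hk : IsMinGen I k) {j : Fin n}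
    (hj : n ≤ j + 2) {s : ℕ} (hs : X j ^ s ∈ I) : expDeg k ≤ s := by
  by_contra! hlt
  obtain ⟨i, hi⟩ : ∃ i, k i ≠ 0 := by
    by_contra! h
    simp [expDeg_eq_degree, show k = 0 from Finsupp.ext h] at hlt
  have hlast : k ⟨n - 1, by omega⟩ = 0 :=
    hk.apply_eq_zero_of_forall_le hI hsat fun c => Fin.le_def.mpr (by simp only; omega)
  have hsplit : k - Finsupp.single i 1 + Finsupp.single i 1 = k :=
    tsub_add_cancel_of_le (Finsupp.single_le_iff.mpr (Nat.one_le_iff_ne_zero.mpr hi))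
  refine hk.2 i hi (hI.monomial_mem_of_le_degree hs (fun c hc => ?_) ?_)
  · have hcl : c ≠ ⟨n - 1, by omega⟩ := by
      rintro rfl
      simp [hlast] at hc
    have := c.isLt
    simp only [Ne, Fin.ext_iff] at hcl
    rw [Fin.le_def]
    omega
  · rw [expDeg_eq_degree, ← hsplit, map_add, Finsupp.degree_single] at hlt
    omega

theorem isMinGen_single_sInf {j : Fin n}
    (h : ∃ t, X j ^ t ∈ I) : IsMinGen I (Finsupp.single j (sInf {t | X j ^ t ∈ I})) := by
  refine ⟨by rw [← X_pow_eq_monomial]; exact Nat.sInf_mem h, fun i hi => ?_⟩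
  obtain ⟨rfl, hs⟩ := Finsupp.single_apply_ne_zero.mp hi
  rw [← Finsupp.single_tsub, ← X_pow_eq_monomial]
  exact Nat.notMem_of_lt_sInf (Nat.sub_lt (Nat.pos_of_ne_zero hs) one_pos)

end

theorem maxDeg_minGen_dim_one {K : Type*} [Field K] {n : ℕ} (hn : 2 ≤ n)
    (I : Ideal (MvPolynomial (Fin n) K)) (hSS : StronglyStable I)
    (hsat : IsSaturatedIdeal I)
    (hdim : ringKrullDim (MvPolynomial (Fin n) K ⧸ I) = 1) :
    (∀ k : Fin n →₀ ℕ, IsMinGen I k →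
      expDeg k ≤ sInf {t : ℕ | (X (⟨n - 2, by omega⟩ : Fin n) : MvPolynomial (Fin n) K) ^ t ∈ I}) ∧
    IsMinGen I (Finsupp.single (⟨n - 2, by omega⟩ : Fin n)
      (sInf {t : ℕ | (X (⟨n - 2, by omega⟩ : Fin n) : MvPolynomial (Fin n) K) ^ t ∈ I})) := by
  have hpow : ∃ t, (X (⟨n - 2, by omega⟩ : Fin n) : MvPolynomial (Fin n) K) ^ t ∈ I := by
    by_contra! h
    have := hSS.sub_le_ringKrullDim_quotient h
    rw [hdim, show n - (n - 2) = 2 by omega] at this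
    exact absurd this (by decide)
  exact ⟨fun k hk => hk.expDeg_le hSS hsat (by simp only; omega) (Nat.sInf_mem hpow),
    isMinGen_single_sInf hpow⟩

end Paper
end

section
/- Let I be a saturated strongly stable monomial ideal of R = K[x_1,…,x_n] with Krull dimension of R/I equal to 1. Let α be the initial degree of I and let deg(R/I) be the eventual constant value of the Hilbert function H(R/I,t) for large t (which exists since dim(R/I) = 1). Then the maximal degree of a minimal generator of I (which equals the Castelnuovo–Mumford regularity reg(I) since I is Borel fixed) satisfies reg(I) ≤ deg(R/I) − C(α−1+n−1, α−1) + α, where C(a,b) denotes the binomial coefficient. -/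
/-!
Strong stability and saturation make `x_n` a nonzerodivisor on `R/I`. Hence `H(R/I, t)` is
nondecreasing, up to its eventual value `deg(R/I)`, and no minimal generator involves `x_n`.
If `x^k` is a minimal generator of degree `d` and `x_i ∣ x^k`, the divisors of `x^k / x_i` give,
in each degree `t ≤ d - 1`, a standard monomial prime to `x_n`, which is not in the image of
multiplication by `x_n`; so `H` increases strictly from degree `α - 1` to `d - 1`. Since
`I_{α-1} = 0`, this yields `C(α-1+n-1, α-1) + (d - α) ≤ H(R/I, d - 1) ≤ deg(R/I)`.
-/

open MvPolynomial

namespace Paper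

variable {K : Type*} [Field K] {n : ℕ}

section Monomials

variable {σ R : Type*} [CommSemiring R]

lemma monomial_one_mem_of_le {I : Ideal (MvPolynomial σ R)} {f e : σ →₀ ℕ} (hfe : f ≤ e)
    (hf : monomial f (1 : R) ∈ I) : monomial e (1 : R) ∈ I :=
  I.mem_of_dvd (monomial_dvd_monomial.mpr ⟨Or.inr hfe, one_dvd _⟩) hf

lemma exists_le_degree_eq {e : σ →₀ ℕ} {m : ℕ} (hm : m ≤ e.degree) :
    ∃ f ≤ e, f.degree = m := by
  induction m with
  | zero => exact ⟨0, zero_le, map_zero _⟩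
  | succ m ih =>
    obtain ⟨f, hfe, rfl⟩ := ih (by omega)
    obtain ⟨i, hi⟩ : ∃ i, f i < e i := by
      by_contra! h
      rw [le_antisymm hfe h] at hm
      omega
    refine ⟨f + Finsupp.single i 1, fun j => ?_, by simp⟩
    rcases eq_or_ne j i with rfl | hj
    · simpa using hi
    · simpa [Finsupp.single_eq_of_ne hj] using hfe j

end Monomials

lemma ncard_degree_eq (t : ℕ) :
    {d : Fin n →₀ ℕ | d.degree = t}.ncard = (n + t - 1).choose t := by
  classical
  have : {d : Fin n →₀ ℕ | d.degree = t} =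
      ↑(Finset.univ.finsuppAntidiag t : Finset (Fin n →₀ ℕ)) := by
    ext d
    simp [Finsupp.degree_eq_sum]
  rw [this, Set.ncard_coe_finset, Finset.card_finsuppAntidiag_nat_eq_choose, Finset.card_univ,
    Fintype.card_fin]

lemma finrank_restrictSupport (s : Set (Fin n →₀ ℕ)) :
    Module.finrank K (restrictSupport K s) = s.ncard := by
  rw [Module.finrank_eq_nat_card_basis (basisRestrictSupport K s), Nat.card_coe_set_eq]

lemma finrank_homogeneousSubmodule (t : ℕ) :
    Module.finrank K (homogeneousSubmodule (Fin n) K t) = (n + t - 1).choose t := by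
  rw [homogeneousSubmodule_eq_finsupp_supported, ← restrictSupport, finrank_restrictSupport,
    ncard_degree_eq]

lemma initDeg_le {I : Ideal (MvPolynomial (Fin n) K)} {f : MvPolynomial (Fin n) K} {t : ℕ}
    (hf : f ∈ I) (hf0 : f ≠ 0) (hft : f.IsHomogeneous t) : initDeg I ≤ t :=
  Nat.sInf_le ⟨f, hf, hf0, hft⟩

lemma initDeg_pos {I : Ideal (MvPolynomial (Fin n) K)} (hI : I ≠ ⊤) {f : MvPolynomial (Fin n) K}
    {t : ℕ} (hf : f ∈ I) (hf0 : f ≠ 0) (hft : f.IsHomogeneous t) : 0 < initDeg I := by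
  refine Nat.pos_of_ne_zero fun h0 => ?_
  obtain ⟨g, hg, hg0, hg_const⟩ : ∃ g ∈ I, g ≠ 0 ∧ g.IsHomogeneous 0 := by
    rcases Nat.sInf_eq_zero.mp h0 with h | h
    · exact h
    · exact absurd (h ▸ ⟨f, hf, hf0, hft⟩ : t ∈ (∅ : Set ℕ)) id
  rw [totalDegree_eq_zero_iff_eq_C.mp (hg_const.totalDegree hg0)] at hg hg0
  exact hI (I.eq_top_of_isUnit_mem hg ((isUnit_iff_ne_zero.mpr (by simpa using hg0)).map C))

lemma HF_of_lt_initDeg {I : Ideal (MvPolynomial (Fin n) K)} {t : ℕ} (ht : t < initDeg I) :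
    HF I t = (n + t - 1).choose t := by
  have hbot : homogeneousSubmodule (Fin n) K t ⊓ I.restrictScalars K = ⊥ := by
    refine (Submodule.eq_bot_iff _).mpr fun f ⟨hft, hf⟩ => ?_
    by_contra hf0
    exact absurd (initDeg_le hf hf0 hft) (not_le.mpr ht)
  rw [HF, if_pos (Int.natCast_nonneg t), Int.toNat_natCast, hbot, finrank_bot,
    finrank_homogeneousSubmodule, Nat.sub_zero]

lemma IsMonomialIdeal.restrictScalars_eq {I : Ideal (MvPolynomial (Fin n) K)}
    (hI : IsMonomialIdeal I) :
    I.restrictScalars K = restrictSupport K {d | monomial d (1 : K) ∈ I} := by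
  refine le_antisymm (fun f hf d hd => hI f hf d hd) ?_
  rw [restrictSupport_eq_span, Submodule.span_le]
  rintro _ ⟨d, hd, rfl⟩
  exact hd

def standardExps (I : Ideal (MvPolynomial (Fin n) K)) (t : ℕ) : Set (Fin n →₀ ℕ) :=
  {d | d.degree = t ∧ monomial d (1 : K) ∉ I}

lemma HF_eq_ncard_standardExps {I : Ideal (MvPolynomial (Fin n) K)} (hI : IsMonomialIdeal I)
    (t : ℕ) : HF I t = (standardExps I t).ncard := by
  have hinf : (homogeneousSubmodule (Fin n) K t ⊓ I.restrictScalars K :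
      Submodule K (MvPolynomial (Fin n) K)) =
      restrictSupport K ({d | d.degree = t} ∩ {d | monomial d (1 : K) ∈ I}) := by
    rw [hI.restrictScalars_eq, homogeneousSubmodule_eq_finsupp_supported]
    ext f
    simp only [Submodule.mem_inf, restrictSupport, AddMonoidAlgebra.mem_supported,
      Set.subset_inter_iff]
  rw [HF, if_pos (Int.natCast_nonneg t), Int.toNat_natCast, hinf,
    homogeneousSubmodule_eq_finsupp_supported, ← restrictSupport, finrank_restrictSupport,
    finrank_restrictSupport, ← Set.ncard_sdiff Set.inter_subset_left
      ((Finsupp.finite_of_degree_le t).subset fun d hd => hd.1.le), Set.sdiff_self_inter]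
  rfl

section RegularVariable

/-- Tested on monomials only; for a monomial ideal `I` this says that `x_i` is a
nonzerodivisor on `R/I`. -/
def IsRegularVar (I : Ideal (MvPolynomial (Fin n) K)) (i : Fin n) : Prop :=
  ∀ e, monomial (e + Finsupp.single i 1) (1 : K) ∈ I → monomial e (1 : K) ∈ I

variable {I : Ideal (MvPolynomial (Fin n) K)} {i : Fin n}

lemma IsRegularVar.apply_eq_zero_of_isMinGen (hreg : IsRegularVar I i) {k : Fin n →₀ ℕ}
    (hk : IsMinGen I k) : k i = 0 := by
  by_contra hki
  refine hk.2 i hki (hreg _ ?_)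
  rw [tsub_add_cancel_of_le (Finsupp.single_le_iff.mpr (Nat.one_le_iff_ne_zero.mpr hki))]
  exact hk.1

/-- Multiplication by `x_i` embeds the standard monomials of degree `t` into those of degree
`t + 1` divisible by `x_i`. -/
lemma HF_add_ncard_le (hI : IsMonomialIdeal I) (hreg : IsRegularVar I i) {t : ℕ}
    {s : Set (Fin n →₀ ℕ)} (hs : s ⊆ standardExps I (t + 1)) (hsi : ∀ g ∈ s, g i = 0) :
    HF I t + s.ncard ≤ HF I ↑(t + 1) := by
  rw [HF_eq_ncard_standardExps hI, HF_eq_ncard_standardExps hI]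
  have hfin : ∀ u, (standardExps I u).Finite := fun u =>
    (Finsupp.finite_of_degree_le u).subset fun d hd => hd.1.le
  have hshift : (· + Finsupp.single i 1) '' standardExps I t ⊆ standardExps I (t + 1) := by
    rintro _ ⟨d, hd, rfl⟩
    exact ⟨by simp [hd.1], fun hmem => hd.2 (hreg d hmem)⟩
  have hdisj : Disjoint ((· + Finsupp.single i 1) '' standardExps I t) s := by
    refine Set.disjoint_left.mpr ?_
    rintro _ ⟨d, -, rfl⟩ hds
    simpa using hsi _ hds
  calc (standardExps I t).ncard + s.ncard
      = ((· + Finsupp.single i 1) '' standardExps I t ∪ s).ncard := by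
        rw [Set.ncard_union_eq hdisj ((hfin t).image _) ((hfin _).subset hs),
          Set.ncard_image_of_injective _ (add_left_injective _)]
    _ ≤ (standardExps I (t + 1)).ncard :=
        Set.ncard_le_ncard (Set.union_subset hshift hs) (hfin _)

lemma HF_monotone (hI : IsMonomialIdeal I) (hreg : IsRegularVar I i) :
    Monotone fun t : ℕ => HF I t :=
  monotone_nat_of_le_succ fun t => by
    simpa using HF_add_ncard_le hI hreg (t := t) (Set.empty_subset _) (by simp)

lemma HF_le_of_eventually_eq (hI : IsMonomialIdeal I) (hreg : IsRegularVar I i) {c : ℕ}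
    (hc : ∃ N : ℤ, ∀ t : ℤ, N ≤ t → HF I t = c) (t : ℕ) : HF I t ≤ c := by
  obtain ⟨N, hN⟩ := hc
  calc HF I t ≤ HF I ↑(max t N.toNat) := HF_monotone hI hreg (le_max_left _ _)
    _ = c := hN _ (by omega)

/-- In each degree `b ≤ deg g` some divisor of `x^g` is a standard monomial prime to
`x_i`. -/
lemma HF_add_le_of_standard (hI : IsMonomialIdeal I) (hreg : IsRegularVar I i)
    {g : Fin n →₀ ℕ} (hg : monomial g (1 : K) ∉ I) (hgi : g i = 0) {a b : ℕ} (hab : a ≤ b)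
    (hb : b ≤ g.degree) : HF I a + (b - a) ≤ HF I b := by
  induction b, hab using Nat.le_induction with
  | base => simp
  | succ b hab ih =>
    obtain ⟨f, hfg, hf⟩ := exists_le_degree_eq hb
    have hstep := HF_add_ncard_le hI hreg (t := b) (s := {f})
      (Set.singleton_subset_iff.mpr ⟨hf, fun hmem => hg (monomial_one_mem_of_le hfg hmem)⟩)
      (by rintro _ rfl; exact Nat.eq_zero_of_le_zero (hgi ▸ hfg i))
    rw [Set.ncard_singleton] at hstep
    have := ih (by omega)
    omega

end RegularVariable

/-- Strong stability lets any variable stand in for `x_n`: `x_j m = (x_j / x_n) (x_n m) ∈ I`,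
so `m ∈ (I : (x_1, …, x_n)) = I`. -/
lemma StronglyStable.isRegularVar_last {m : ℕ} {I : Ideal (MvPolynomial (Fin (m + 1)) K)}
    (hSS : StronglyStable I) (hsat : IsSaturatedIdeal I) : IsRegularVar I (Fin.last m) := by
  intro e he
  have hXj : ∀ j, monomial (e + Finsupp.single j 1) (1 : K) ∈ I := by
    intro j
    rcases (Fin.le_last j).lt_or_eq with hj | rfl
    · simpa [add_right_comm e] using hSS.2 _ he _ j hj (by simp)
    · exact he
  rw [← hsat, irrel, Ideal.colon_span, Submodule.mem_colon]
  rintro _ ⟨j, rfl⟩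
  simpa [X, monomial_mul] using hXj j

theorem reg_bound_dim_one {K : Type*} [Field K] {n : ℕ}
    (I : Ideal (MvPolynomial (Fin n) K)) (hSS : StronglyStable I)
    (hsat : IsSaturatedIdeal I)
    (hdim : ringKrullDim (MvPolynomial (Fin n) K ⧸ I) = 1)
    (degRI : ℕ) (hdeg : ∃ N : ℤ, ∀ t : ℤ, N ≤ t → HF I t = degRI) :
    ∀ k : Fin n →₀ ℕ, IsMinGen I k →
      (expDeg k : ℤ) ≤ (degRI : ℤ) -
        Nat.choose (initDeg I - 1 + (n - 1)) (initDeg I - 1) + initDeg I := by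
  intro k hk
  have hI : I ≠ ⊤ := by
    rintro rfl
    simp [ringKrullDim_eq_bot_of_subsingleton] at hdim
  obtain ⟨i, hi⟩ : ∃ i, k i ≠ 0 := by
    by_contra! hk0
    have h1 : monomial 0 (1 : K) ∈ I := Finsupp.ext hk0 (g := 0) ▸ hk.1
    exact hI ((Ideal.eq_top_iff_one I).mpr (by simpa using h1))
  obtain ⟨m, rfl⟩ := Nat.exists_eq_add_one_of_ne_zero i.pos.ne'
  have hreg := hSS.isRegularVar_last hsat
  have hkhom : (monomial k (1 : K)).IsHomogeneous k.degree := isHomogeneous_monomial _ rfl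
  have hk0 : monomial k (1 : K) ≠ 0 := monomial_eq_zero.not.mpr one_ne_zero
  have hα := initDeg_pos hI hk.1 hk0 hkhom
  have hαk := initDeg_le hk.1 hk0 hkhom
  -- `x^g = x^k / x_i` is a standard monomial of degree `deg k - 1` prime to `x_n`
  have hstd : monomial (k - Finsupp.single i 1) (1 : K) ∉ I := hk.2 i hi
  have hk_eq : k - Finsupp.single i 1 + Finsupp.single i 1 = k :=
    tsub_add_cancel_of_le (Finsupp.single_le_iff.mpr (Nat.one_le_iff_ne_zero.mpr hi))
  set g := k - Finsupp.single i 1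
  have hgk : g.degree + 1 = k.degree := by simpa using congrArg Finsupp.degree hk_eq
  have hg_last : g (Fin.last m) = 0 := by
    simp [g, hreg.apply_eq_zero_of_isMinGen hk]
  have hlow := HF_add_le_of_standard hSS.1 hreg hstd hg_last
    (a := initDeg I - 1) (by omega) le_rfl
  have hup := HF_le_of_eventually_eq hSS.1 hreg hdeg g.degree
  rw [HF_of_lt_initDeg (by omega),
    show m + 1 + (initDeg I - 1) - 1 = initDeg I - 1 + (m + 1 - 1) by omega] at hlow
  change ((k.degree : ℕ) : ℤ) ≤ _
  omega

end Paper
end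

section
/- Let I be a saturated homogeneous ideal of R = K[x_1,…,x_n] (n ≥ 3, char K = 0) such that the Krull dimension of R/I is at most 2 (so I defines a subscheme of ℙ^{n−1} of dimension ≤ 1). Let d be an integer and suppose there exist linear forms L₁, L₂ such that L₁ is a nonzerodivisor on R/I and (R/(I + (L₁,L₂)))_{d+1} = 0 (i.e., d ≥ r₂(R/I)). Then ΔH(R/I,d) ≥ ΔH(R/I,d+1). -/
open MvPolynomial

namespace Paper

variable {K : Type*} [Field K] {n : ℕ}

/-!
Put `J = I + (L₁)`. As `L₁` is regular on `R/I`, the sequences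
`0 → (R/I)_{t-1} → (R/I)_t → (R/J)_t → 0` are exact, so `H(R/J, t) = ΔH(R/I, t)`. The hypothesis
`(R/(J + (L₂)))_{d+1} = 0` says that multiplication by `L₂` maps `(R/J)_d` onto `(R/J)_{d+1}`,
hence `ΔH(R/I, d+1) = H(R/J, d+1) ≤ H(R/J, d) = ΔH(R/I, d)`. Both facts are dimension counts
resting on `(A + (L))_{t+1} = A_{t+1} + L·R_t` for a homogeneous ideal `A` and a linear form `L`.
-/

open DirectSum Module

attribute [local instance] MvPolynomial.gradedAlgebra

section Graded

variable {σ R : Type*} [CommRing R] {φ ψ : MvPolynomial σ R} {i m : ℕ}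

theorem homogeneousComponent_mul_of_le (hφ : φ.IsHomogeneous i) (h : i ≤ m) :
    homogeneousComponent m (φ * ψ) = φ * homogeneousComponent (m - i) ψ := by
  simpa [← decomposition.decompose'_apply] using
    coe_decompose_mul_of_left_mem_of_le (𝒜 := homogeneousSubmodule σ R) (b := ψ) hφ h

theorem homogeneousComponent_mul_of_lt (hφ : φ.IsHomogeneous i) (h : m < i) :
    homogeneousComponent m (φ * ψ) = 0 := by
  simpa [← decomposition.decompose'_apply] using
    coe_decompose_mul_of_left_mem_of_not_le (𝒜 := homogeneousSubmodule σ R) (b := ψ) hφ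
      h.not_ge

end Graded

theorem IsHomogeneousIdeal.isHomogeneous {I : Ideal (MvPolynomial (Fin n) K)}
    (h : IsHomogeneousIdeal I) : I.IsHomogeneous (homogeneousSubmodule (Fin n) K) :=
  fun i r hr => by simpa [← decomposition.decompose'_apply] using h r hr i

section HomogeneousPart

variable {σ : Type*} {A : Ideal (MvPolynomial σ K)} {L : MvPolynomial σ K}

noncomputable def homogeneousPart (A : Ideal (MvPolynomial σ K)) (t : ℕ) :
    Submodule K (MvPolynomial σ K) :=
  homogeneousSubmodule σ K t ⊓ A.restrictScalars K

theorem homogeneousPart_top (t : ℕ) :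
    homogeneousPart (⊤ : Ideal (MvPolynomial σ K)) t = homogeneousSubmodule σ K t := by
  simp [homogeneousPart]

theorem map_mulLeft_homogeneousSubmodule_le (hL : L.IsHomogeneous 1) (t : ℕ) :
    (homogeneousSubmodule σ K t).map (LinearMap.mulLeft K L) ≤
      homogeneousSubmodule σ K (t + 1) := by
  rintro _ ⟨h, hh, rfl⟩
  simpa [add_comm] using hL.mul hh

theorem homogeneousPart_sup_span_singleton_zero
    (hA : A.IsHomogeneous (homogeneousSubmodule σ K)) (hL : L.IsHomogeneous 1) :
    homogeneousPart (A ⊔ Ideal.span {L}) 0 = homogeneousPart A 0 := by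
  refine le_antisymm ?_ (inf_le_inf_left _ fun _ hf => Ideal.mem_sup_left hf)
  rintro f ⟨hf, hfA⟩
  obtain ⟨a, ha, _, hg, rfl⟩ := Submodule.mem_sup.1 hfA
  obtain ⟨g, rfl⟩ := Ideal.mem_span_singleton.1 hg
  refine ⟨hf, ?_⟩
  rw [← homogeneousComponent_eq_self hf, map_add, homogeneousComponent_mul_of_lt hL zero_lt_one,
    add_zero]
  exact homogeneousComponent_mem_of_mem hA ha 0

theorem homogeneousPart_sup_span_singleton_succ
    (hA : A.IsHomogeneous (homogeneousSubmodule σ K)) (hL : L.IsHomogeneous 1) (t : ℕ) :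
    homogeneousPart (A ⊔ Ideal.span {L}) (t + 1) =
      homogeneousPart A (t + 1) ⊔ (homogeneousSubmodule σ K t).map (LinearMap.mulLeft K L) := by
  refine le_antisymm ?_ (sup_le (inf_le_inf_left _ fun _ hf => Ideal.mem_sup_left hf) ?_)
  · rintro f ⟨hf, hfA⟩
    obtain ⟨a, ha, _, hg, rfl⟩ := Submodule.mem_sup.1 hfA
    obtain ⟨g, rfl⟩ := Ideal.mem_span_singleton.1 hg
    rw [← homogeneousComponent_eq_self hf, map_add, homogeneousComponent_mul_of_le hL le_add_self,
      Nat.add_sub_cancel]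
    exact Submodule.add_mem_sup
      ⟨homogeneousComponent_mem _ a, homogeneousComponent_mem_of_mem hA ha _⟩
      ⟨_, homogeneousComponent_mem t g, rfl⟩
  · refine le_inf (map_mulLeft_homogeneousSubmodule_le hL t) ?_
    rintro _ ⟨h, -, rfl⟩
    exact Ideal.mem_sup_right (Ideal.mul_mem_right h _ (Ideal.mem_span_singleton_self L))

theorem map_mulLeft_homogeneousPart_le (hL : L.IsHomogeneous 1) (t : ℕ) :
    (homogeneousPart A t).map (LinearMap.mulLeft K L) ≤
      homogeneousPart A (t + 1) ⊓ (homogeneousSubmodule σ K t).map (LinearMap.mulLeft K L) := by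
  rintro _ ⟨h, ⟨hh, hhA⟩, rfl⟩
  exact ⟨⟨map_mulLeft_homogeneousSubmodule_le hL t ⟨h, hh, rfl⟩, A.mul_mem_left L hhA⟩,
    h, hh, rfl⟩

theorem finrank_map_mulLeft (hL : L ≠ 0) (V : Submodule K (MvPolynomial σ K)) :
    finrank K (V.map (LinearMap.mulLeft K L)) = finrank K V :=
  (Submodule.equivMapOfInjective _ (mul_right_injective₀ hL) V).finrank_eq.symm

end HomogeneousPart

section Finrank

variable {σ : Type*} [Finite σ] {A : Ideal (MvPolynomial σ K)} {L : MvPolynomial σ K}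

instance (t : ℕ) : FiniteDimensional K (homogeneousSubmodule σ K t) :=
  Module.Finite.of_fg (homogeneousSubmodule_fg σ K t)

instance (A : Ideal (MvPolynomial σ K)) (t : ℕ) : FiniteDimensional K (homogeneousPart A t) :=
  Submodule.finiteDimensional_of_le inf_le_left

theorem finrank_homogeneousPart_le (A : Ideal (MvPolynomial σ K)) (t : ℕ) :
    finrank K (homogeneousPart A t) ≤ finrank K (homogeneousSubmodule σ K t) :=
  Submodule.finrank_mono inf_le_left

theorem finrank_homogeneousPart_sup_span_singleton_succ_add
    (hA : A.IsHomogeneous (homogeneousSubmodule σ K)) (hL : L.IsHomogeneous 1) (hL₀ : L ≠ 0)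
    (t : ℕ) :
    finrank K (homogeneousPart (A ⊔ Ideal.span {L}) (t + 1)) +
        finrank K (homogeneousPart A (t + 1) ⊓
          (homogeneousSubmodule σ K t).map (LinearMap.mulLeft K L) : Submodule K _) =
      finrank K (homogeneousPart A (t + 1)) + finrank K (homogeneousSubmodule σ K t) := by
  have : FiniteDimensional K ((homogeneousSubmodule σ K t).map (LinearMap.mulLeft K L)) :=
    Submodule.finiteDimensional_of_le (map_mulLeft_homogeneousSubmodule_le hL t)
  rw [homogeneousPart_sup_span_singleton_succ hA hL, Submodule.finrank_sup_add_finrank_inf_eq,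
    finrank_map_mulLeft hL₀]

theorem finrank_homogeneousPart_sup_span_singleton_succ_of_regular
    (hA : A.IsHomogeneous (homogeneousSubmodule σ K)) (hL : L.IsHomogeneous 1)
    (hreg : ∀ g, L * g ∈ A → g ∈ A) (t : ℕ) :
    finrank K (homogeneousPart (A ⊔ Ideal.span {L}) (t + 1)) + finrank K (homogeneousPart A t) =
      finrank K (homogeneousPart A (t + 1)) + finrank K (homogeneousSubmodule σ K t) := by
  rcases eq_or_ne L 0 with rfl | hL₀
  · obtain rfl : A = ⊤ := A.eq_top_of_isUnit_mem (hreg 1 (by simp)) isUnit_one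
    rw [Ideal.span_singleton_zero, sup_bot_eq, homogeneousPart_top, homogeneousPart_top, add_comm]
  have hinf : homogeneousPart A (t + 1) ⊓
      (homogeneousSubmodule σ K t).map (LinearMap.mulLeft K L) =
        (homogeneousPart A t).map (LinearMap.mulLeft K L) := by
    refine le_antisymm ?_ (map_mulLeft_homogeneousPart_le hL t)
    rintro _ ⟨⟨-, hLh⟩, h, hh, rfl⟩
    exact ⟨h, ⟨hh, hreg h hLh⟩, rfl⟩
  rw [← finrank_homogeneousPart_sup_span_singleton_succ_add hA hL hL₀, hinf,
    finrank_map_mulLeft hL₀]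

theorem finrank_homogeneousSubmodule_succ_add_le
    (hA : A.IsHomogeneous (homogeneousSubmodule σ K)) (hL : L.IsHomogeneous 1) {t : ℕ}
    (hfull : homogeneousPart (A ⊔ Ideal.span {L}) (t + 1) = homogeneousSubmodule σ K (t + 1)) :
    finrank K (homogeneousSubmodule σ K (t + 1)) + finrank K (homogeneousPart A t) ≤
      finrank K (homogeneousSubmodule σ K t) + finrank K (homogeneousPart A (t + 1)) := by
  rcases eq_or_ne L 0 with rfl | hL₀
  · rw [Ideal.span_singleton_zero, sup_bot_eq] at hfull
    rw [hfull, add_comm]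
    exact Nat.add_le_add_right (finrank_homogeneousPart_le A t) _
  have hle := Submodule.finrank_mono (map_mulLeft_homogeneousPart_le (A := A) hL t)
  rw [finrank_map_mulLeft hL₀] at hle
  have := finrank_homogeneousPart_sup_span_singleton_succ_add hA hL hL₀ t
  rw [hfull] at this
  omega

end Finrank

section HilbertFunction

variable {A : Ideal (MvPolynomial (Fin n) K)} {L : MvPolynomial (Fin n) K}

theorem HF_natCast (A : Ideal (MvPolynomial (Fin n) K)) (t : ℕ) :
    (HF A t : ℤ) =
      finrank K (homogeneousSubmodule (Fin n) K t) - finrank K (homogeneousPart A t) := by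
  rw [HF, if_pos (Int.natCast_nonneg t), Int.toNat_natCast]
  exact Nat.cast_sub (finrank_homogeneousPart_le A t)

theorem HF_of_neg (A : Ideal (MvPolynomial (Fin n) K)) {t : ℤ} (ht : t < 0) : HF A t = 0 :=
  if_neg ht.not_ge

theorem HF_sup_span_singleton_zero (hA : A.IsHomogeneous (homogeneousSubmodule (Fin n) K))
    (hL : L.IsHomogeneous 1) : HF (A ⊔ Ideal.span {L}) 0 = HF A 0 := by
  have h := HF_natCast (A ⊔ Ideal.span {L}) 0
  rw [homogeneousPart_sup_span_singleton_zero hA hL, ← HF_natCast] at h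
  exact_mod_cast h

theorem HF_sup_span_singleton_eq_dH_of_regular
    (hA : A.IsHomogeneous (homogeneousSubmodule (Fin n) K)) (hL : L.IsHomogeneous 1)
    (hreg : ∀ g, L * g ∈ A → g ∈ A) (t : ℤ) :
    (HF (A ⊔ Ideal.span {L}) t : ℤ) = dH A t := by
  rcases lt_or_ge t 0 with ht | ht
  · simp [dH, HF_of_neg _ ht, HF_of_neg _ (show t - 1 < 0 by omega)]
  lift t to ℕ using ht
  cases t with
  | zero => simp [dH, HF_sup_span_singleton_zero hA hL, HF_of_neg A (show (-1 : ℤ) < 0 by omega)]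
  | succ s =>
    have := finrank_homogeneousPart_sup_span_singleton_succ_of_regular hA hL hreg s
    rw [dH, show ((s + 1 : ℕ) : ℤ) - 1 = s by push_cast; ring, HF_natCast, HF_natCast,
      HF_natCast]
    omega

theorem homogeneousPart_eq_of_HF_eq_zero {t : ℕ} (h : HF A t = 0) :
    homogeneousPart A t = homogeneousSubmodule (Fin n) K t := by
  have h' := HF_natCast A t
  rw [h] at h'
  exact Submodule.eq_of_le_of_finrank_le inf_le_left (by omega)

theorem HF_succ_le_of_HF_sup_span_singleton_succ_eq_zero
    (hA : A.IsHomogeneous (homogeneousSubmodule (Fin n) K)) (hL : L.IsHomogeneous 1) {t : ℤ}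
    (h : HF (A ⊔ Ideal.span {L}) (t + 1) = 0) : HF A (t + 1) ≤ HF A t := by
  rcases lt_or_ge t 0 with ht | ht
  · rcases (show t + 1 ≤ 0 by omega).lt_or_eq with ht' | ht'
    · simp [HF_of_neg A ht']
    · rw [ht', ← HF_sup_span_singleton_zero hA hL, ← ht', h]
      exact Nat.zero_le _
  lift t to ℕ using ht
  have hfull := homogeneousPart_eq_of_HF_eq_zero (t := t + 1) (by exact_mod_cast h)
  have := finrank_homogeneousSubmodule_succ_add_le hA hL hfull
  have h1 := HF_natCast A (t + 1)
  have h0 := HF_natCast A t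
  push_cast at h1
  omega

end HilbertFunction

theorem dH_decreasing_general {K : Type*} [Field K] {n : ℕ}
    (I : Ideal (MvPolynomial (Fin n) K)) (hhom : IsHomogeneousIdeal I)
    (d : ℤ) (L₁ L₂ : MvPolynomial (Fin n) K)
    (hL₁ : L₁.IsHomogeneous 1) (hL₂ : L₂.IsHomogeneous 1)
    (hreg : ∀ g : MvPolynomial (Fin n) K, L₁ * g ∈ I → g ∈ I)
    (hzero : HF (I ⊔ Ideal.span {L₁, L₂}) (d + 1) = 0) :
    dH I (d + 1) ≤ dH I d := by
  have hI := hhom.isHomogeneous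
  have hJ : (I ⊔ Ideal.span {L₁}).IsHomogeneous (homogeneousSubmodule (Fin n) K) :=
    hI.sup (Ideal.homogeneous_span _ _ fun x hx => ⟨1, by rwa [Set.mem_singleton_iff.1 hx]⟩)
  rw [Ideal.span_insert, ← sup_assoc] at hzero
  rw [← HF_sup_span_singleton_eq_dH_of_regular hI hL₁ hreg,
    ← HF_sup_span_singleton_eq_dH_of_regular hI hL₁ hreg]
  exact_mod_cast HF_succ_le_of_HF_sup_span_singleton_succ_eq_zero hJ hL₂ hzero

theorem dH_decreasing {K : Type*} [Field K] [CharZero K] {n : ℕ} (hn : 3 ≤ n)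
    (I : Ideal (MvPolynomial (Fin n) K)) (hhom : IsHomogeneousIdeal I)
    (hsat : IsSaturatedIdeal I)
    (hdim : ringKrullDim (MvPolynomial (Fin n) K ⧸ I) ≤ 2)
    (d : ℤ) (L₁ L₂ : MvPolynomial (Fin n) K)
    (hL₁ : L₁.IsHomogeneous 1) (hL₂ : L₂.IsHomogeneous 1)
    (hreg : ∀ g : MvPolynomial (Fin n) K, L₁ * g ∈ I → g ∈ I)
    (hzero : HF (I ⊔ Ideal.span {L₁, L₂}) (d + 1) = 0) :
    dH I (d + 1) ≤ dH I d :=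
  dH_decreasing_general I hhom d L₁ L₂ hL₁ hL₂ hreg hzero

end Paper
end
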